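/- arXiv:1204.1417 — 4 statements merged into one kernel-verified Lean document; each statement's English description precedes it below -/
import Mathlib

section
/- Let G be a graph, {s,t} a vertex separator of G, and H a subgraph of G which is a subdivision of K_4. Then there exists a single connected component X_0 of G - {s,t} such that all four branching nodes of H (the vertices of degree 3 in H) belong to X_0 ∪ {s,t}. -/
/-!
Subdividing an edge `uv` by a new vertex `x` keeps every old degree and gives `x` degree two, so
the branch vertices of a subdivision of `K₄` are its four original vertices. Any two of them are
joined by three internally disjoint walks: in `K₄` the edge and the two paths through the other
branch vertices, and after each subdivision the old walks rerouted through `x`. Two vertices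
`s, t` distinct from the ends meet at most two of the three walks, so the third one survives in
`G - {s, t}`, and all branch vertices outside `{s, t}` lie in a single component.
-/

/-- The complete graph `K₄`, realized on vertex set `{0,1,2,3} ⊆ ℕ`. -/
def K4 : SimpleGraph ℕ :=
  SimpleGraph.fromRel (fun a b => a < 4 ∧ b < 4 ∧ a ≠ b)

/-- One subdivision step: delete an edge `(u,v)` and add a new vertex `x`
(not occurring in the graph) adjacent to both `u` and `v`. -/
def SubdivStep (G G' : SimpleGraph ℕ) : Prop :=
  ∃ u v x : ℕ, G.Adj u v ∧ x ∉ G.support ∧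
    G' = SimpleGraph.fromEdgeSet ((G.edgeSet \ {s(u, v)}) ∪ {s(u, x), s(x, v)})

/-- `G` is a subdivision of `K₄`. -/
def IsK4Subdivision (G : SimpleGraph ℕ) : Prop :=
  Relation.ReflTransGen SubdivStep K4 G

namespace SimpleGraph

variable {V : Type*}

section InternallyDisjoint

variable {G : SimpleGraph V} {a b : V}

/-- The edge condition only forbids both walks to use the edge `ab`; without it, subdividing
that edge would make them meet in the new vertex. -/
def Walk.InternallyDisjoint (p q : G.Walk a b) : Prop :=
  (∀ z ∈ p.support, z ∈ q.support → z = a ∨ z = b) ∧ p.edges.Disjoint q.edges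

lemma Walk.InternallyDisjoint.notMem_support {p q : G.Walk a b} (h : p.InternallyDisjoint q)
    {z : V} (hza : z ≠ a) (hzb : z ≠ b) (hz : z ∈ p.support) : z ∉ q.support :=
  fun hq => (h.1 z hz hq).elim hza hzb

variable (G) in
def HasThreeInternallyDisjointWalks (a b : V) : Prop :=
  ∃ p q r : G.Walk a b, p.InternallyDisjoint q ∧ p.InternallyDisjoint r ∧ q.InternallyDisjoint r

lemma hasThreeInternallyDisjointWalks_of_adj {c d : V} (hab : G.Adj a b) (hac : G.Adj a c)
    (hcb : G.Adj c b) (had : G.Adj a d) (hdb : G.Adj d b) (hcd : c ≠ d) :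
    G.HasThreeInternallyDisjointWalks a b := by
  refine ⟨hab.toWalk, .cons hac hcb.toWalk, .cons had hdb.toWalk, ?_, ?_, ?_⟩ <;>
    refine ⟨?_, ?_⟩ <;> simp <;> grind [Adj.ne]

lemma HasThreeInternallyDisjointWalks.exists_walk_avoiding
    (h : G.HasThreeInternallyDisjointWalks a b) {s t : V} (hsa : s ≠ a) (hsb : s ≠ b)
    (hta : t ≠ a) (htb : t ≠ b) : ∃ w : G.Walk a b, s ∉ w.support ∧ t ∉ w.support := by
  obtain ⟨p, q, r, hpq, hpr, hqr⟩ := h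
  by_cases hsp : s ∈ p.support
  · by_cases htq : t ∈ q.support
    · exact ⟨r, hpr.notMem_support hsa hsb hsp, hqr.notMem_support hta htb htq⟩
    · exact ⟨q, hpq.notMem_support hsa hsb hsp, htq⟩
  · by_cases htp : t ∈ p.support
    · by_cases hsq : s ∈ q.support
      · exact ⟨r, hqr.notMem_support hsa hsb hsq, hpr.notMem_support hta htb htp⟩
      · exact ⟨q, hsq, hpq.notMem_support hta htb htp⟩
    · exact ⟨p, hsp, htp⟩

lemma HasThreeInternallyDisjointWalks.reachable_induce_compl_pair
    (h : G.HasThreeInternallyDisjointWalks a b) {s t : V} (ha : a ∈ ({s, t} : Set V)ᶜ)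
    (hb : b ∈ ({s, t} : Set V)ᶜ) :
    (G.induce ({s, t} : Set V)ᶜ).Reachable ⟨a, ha⟩ ⟨b, hb⟩ := by
  simp only [Set.mem_compl_iff, Set.mem_insert_iff, Set.mem_singleton_iff, not_or] at ha hb
  obtain ⟨w, hs, ht⟩ := h.exists_walk_avoiding (Ne.symm ha.1) (Ne.symm hb.1) (Ne.symm ha.2)
    (Ne.symm hb.2)
  refine ⟨w.induce _ fun z hz => ?_⟩
  rintro (rfl | rfl)
  exacts [hs hz, ht hz]

end InternallyDisjoint

section ReplaceEdge

variable {H H' : SimpleGraph V} {u v x : V}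

lemma adj_detour (hux : H'.Adj u x) (hxv : H'.Adj x v) {a c : V} (he : s(a, c) = s(u, v)) :
    H'.Adj a x ∧ H'.Adj x c := by
  rcases Sym2.eq_iff.mp he with ⟨rfl, rfl⟩ | ⟨rfl, rfl⟩
  exacts [⟨hux, hxv⟩, ⟨hxv.symm, hux.symm⟩]

variable [DecidableEq V]

def Walk.replaceEdge (hux : H'.Adj u x) (hxv : H'.Adj x v)
    (hkeep : ∀ ⦃p q : V⦄, H.Adj p q → s(p, q) ≠ s(u, v) → H'.Adj p q) :
    ∀ {a b : V}, H.Walk a b → H'.Walk a b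
  | _, _, .nil => .nil
  | a, _, .cons (v := c) h p =>
    if he : s(a, c) = s(u, v) then
      .cons (adj_detour hux hxv he).1 (.cons (adj_detour hux hxv he).2 (p.replaceEdge hux hxv hkeep))
    else .cons (hkeep h he) (p.replaceEdge hux hxv hkeep)

variable (hux : H'.Adj u x) (hxv : H'.Adj x v)
  (hkeep : ∀ ⦃p q : V⦄, H.Adj p q → s(p, q) ≠ s(u, v) → H'.Adj p q)

lemma Walk.mem_support_replaceEdge {a b z : V} (p : H.Walk a b)
    (hz : z ∈ (p.replaceEdge hux hxv hkeep).support) :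
    z ∈ p.support ∨ z = x ∧ s(u, v) ∈ p.edges := by
  induction p with
  | nil => simpa [replaceEdge] using hz
  | cons h p ih =>
    rw [replaceEdge] at hz
    split_ifs at hz with he
    · simp only [support_cons, List.mem_cons] at hz
      rcases hz with rfl | rfl | hz
      · simp
      · simp [he]
      · rcases ih hz with h | h <;> simp [h]
    · simp only [support_cons, List.mem_cons] at hz
      rcases hz with rfl | hz
      · simp
      · rcases ih hz with h | h <;> simp [h]

lemma Walk.mem_edges_replaceEdge {a b : V} {e : Sym2 V} (p : H.Walk a b)
    (he : e ∈ (p.replaceEdge hux hxv hkeep).edges) :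
    e ∈ p.edges ∨ x ∈ e ∧ s(u, v) ∈ p.edges := by
  induction p with
  | nil => simp [replaceEdge] at he
  | cons h p ih =>
    rw [replaceEdge] at he
    split_ifs at he with huv
    · simp only [edges_cons, List.mem_cons] at he
      rcases he with rfl | rfl | he
      · simp [huv]
      · simp [huv]
      · rcases ih he with h | h <;> simp [h]
    · simp only [edges_cons, List.mem_cons] at he
      rcases he with rfl | he
      · simp
      · rcases ih he with h | h <;> simp [h]

lemma Walk.InternallyDisjoint.replaceEdge {a b : V} {p q : H.Walk a b}
    (h : p.InternallyDisjoint q) (hp : x ∉ p.support) (hq : x ∉ q.support) :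
    (p.replaceEdge hux hxv hkeep).InternallyDisjoint (q.replaceEdge hux hxv hkeep) := by
  have notMem_edge {w : H.Walk a b} (hw : x ∉ w.support) {e : Sym2 V} (he : e ∈ w.edges) :
      x ∉ e := fun hxe => hw (mem_support_iff_exists_mem_edges.mpr (.inr ⟨e, he, hxe⟩))
  refine ⟨fun z hzp hzq => ?_, fun e hep heq => ?_⟩
  · rcases p.mem_support_replaceEdge hux hxv hkeep hzp with hzp | ⟨rfl, hp'⟩ <;>
      rcases q.mem_support_replaceEdge hux hxv hkeep hzq with hzq | ⟨hzx, hq'⟩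
    exacts [h.1 z hzp hzq, (hp (hzx ▸ hzp)).elim, (hq hzq).elim, (h.2 hp' hq').elim]
  · rcases p.mem_edges_replaceEdge hux hxv hkeep hep with hep | ⟨hxe, hp'⟩ <;>
      rcases q.mem_edges_replaceEdge hux hxv hkeep heq with heq | ⟨hxe', hq'⟩
    exacts [h.2 hep heq, notMem_edge hp hep hxe', notMem_edge hq heq hxe, h.2 hp' hq']

end ReplaceEdge

section SubdivideEdge

variable {H : SimpleGraph V} {u v x : V}

def subdivideEdge (H : SimpleGraph V) (u v x : V) : SimpleGraph V :=
  fromEdgeSet ((H.edgeSet \ {s(u, v)}) ∪ {s(u, x), s(x, v)})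

lemma subdivideEdge_comm : H.subdivideEdge u v x = H.subdivideEdge v u x := by
  simp only [subdivideEdge, Sym2.eq_swap]
  rw [Set.pair_comm]

variable (huv : H.Adj u v) (hx : x ∉ H.support)
include huv hx

lemma subdivideEdge_adj {p q : V} :
    (H.subdivideEdge u v x).Adj p q ↔
      H.Adj p q ∧ s(p, q) ≠ s(u, v) ∨ s(p, q) = s(u, x) ∨ s(p, q) = s(x, v) := by
  simp only [subdivideEdge, fromEdgeSet_adj, Set.mem_union, Set.mem_sdiff, mem_edgeSet,
    Set.mem_singleton_iff, Set.mem_insert_iff, Sym2.eq_iff]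
  grind [Adj.symm, mem_support, Adj.ne]

lemma neighborSet_subdivideEdge_self :
    (H.subdivideEdge u v x).neighborSet x = {u, v} := by
  ext q
  simp only [mem_neighborSet, subdivideEdge_adj huv hx, Set.mem_insert_iff,
    Set.mem_singleton_iff, Sym2.eq_iff]
  grind [Adj.symm, mem_support, Adj.ne]

lemma neighborSet_subdivideEdge_left :
    (H.subdivideEdge u v x).neighborSet u = insert x (H.neighborSet u \ {v}) := by
  ext q
  simp only [mem_neighborSet, subdivideEdge_adj huv hx, Set.mem_insert_iff,
    Set.mem_singleton_iff, Set.mem_sdiff, Sym2.eq_iff]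
  grind [Adj.symm, mem_support, Adj.ne]

lemma neighborSet_subdivideEdge_of_ne {w : V} (hwu : w ≠ u) (hwv : w ≠ v) (hwx : w ≠ x) :
    (H.subdivideEdge u v x).neighborSet w = H.neighborSet w := by
  ext q
  simp only [mem_neighborSet, subdivideEdge_adj huv hx, Sym2.eq_iff]
  grind [Adj.symm, mem_support, Adj.ne]

lemma encard_neighborSet_subdivideEdge {w : V} (hwx : w ≠ x) :
    ((H.subdivideEdge u v x).neighborSet w).encard = (H.neighborSet w).encard := by
  have hxN : ∀ y, x ∉ H.neighborSet y := fun y h => hx ⟨y, h.symm⟩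
  by_cases hwu : w = u
  · subst hwu
    rw [neighborSet_subdivideEdge_left huv hx, Set.encard_exchange (hxN w) huv]
  by_cases hwv : w = v
  · subst hwv
    rw [subdivideEdge_comm, neighborSet_subdivideEdge_left huv.symm hx,
      Set.encard_exchange (hxN w) huv.symm]
  rw [neighborSet_subdivideEdge_of_ne huv hx hwu hwv hwx]

lemma HasThreeInternallyDisjointWalks.subdivideEdge {a b : V}
    (h : H.HasThreeInternallyDisjointWalks a b) (hab : a ≠ b) :
    (H.subdivideEdge u v x).HasThreeInternallyDisjointWalks a b := by
  classical
  obtain ⟨p, q, r, hpq, hpr, hqr⟩ := h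
  have hux := (subdivideEdge_adj huv hx).2 (.inr (.inl rfl))
  have hxv := (subdivideEdge_adj huv hx).2 (.inr (.inr rfl))
  have hkeep : ∀ ⦃y z : V⦄, H.Adj y z → s(y, z) ≠ s(u, v) → (H.subdivideEdge u v x).Adj y z :=
    fun _ _ h hne => (subdivideEdge_adj huv hx).2 (.inl ⟨h, hne⟩)
  have hxw (w : H.Walk a b) : x ∉ w.support := fun hw =>
    hx (mem_support_of_mem_walk_support w (Walk.not_nil_of_ne hab) hw)
  exact ⟨p.replaceEdge hux hxv hkeep, q.replaceEdge hux hxv hkeep, r.replaceEdge hux hxv hkeep,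
    hpq.replaceEdge hux hxv hkeep (hxw p) (hxw q), hpr.replaceEdge hux hxv hkeep (hxw p) (hxw r),
    hqr.replaceEdge hux hxv hkeep (hxw q) (hxw r)⟩

end SubdivideEdge

end SimpleGraph

open SimpleGraph

lemma subdivStep_iff {H H' : SimpleGraph ℕ} :
    SubdivStep H H' ↔ ∃ u v x, H.Adj u v ∧ x ∉ H.support ∧ H' = H.subdivideEdge u v x :=
  Iff.rfl

lemma K4_adj {a b : ℕ} : K4.Adj a b ↔ a < 4 ∧ b < 4 ∧ a ≠ b := by
  simp only [K4, fromRel_adj]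
  tauto

lemma ncard_neighborSet_K4_eq_three_iff (w : ℕ) : (K4.neighborSet w).ncard = 3 ↔ w < 4 := by
  by_cases hw : w < 4
  · have : K4.neighborSet w = ↑((Finset.range 4).erase w) := by
      ext y
      simp only [mem_neighborSet, K4_adj, Finset.coe_erase, Finset.coe_range, Set.mem_sdiff,
        Set.mem_Iio, Set.mem_singleton_iff]
      tauto
    simp [this, hw]
  · have : K4.neighborSet w = ∅ := by
      ext y
      simp [K4_adj, hw]
    simp [this, hw]

lemma K4_hasThreeInternallyDisjointWalks {a b : ℕ} (ha : a < 4) (hb : b < 4) (hab : a ≠ b) :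
    K4.HasThreeInternallyDisjointWalks a b := by
  have hcard : ((Finset.range 4) \ {a, b}).card = 2 := by
    rw [Finset.card_sdiff_of_subset (by simp [Finset.insert_subset_iff, ha, hb]),
      Finset.card_pair hab, Finset.card_range]
  obtain ⟨c, d, hcd, hcd_eq⟩ := Finset.card_eq_two.mp hcard
  have hc : c ∈ (Finset.range 4) \ {a, b} := by simp [hcd_eq]
  have hd : d ∈ (Finset.range 4) \ {a, b} := by simp [hcd_eq]
  simp only [Finset.mem_sdiff, Finset.mem_range, Finset.mem_insert, Finset.mem_singleton,
    not_or] at hc hd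
  exact hasThreeInternallyDisjointWalks_of_adj (K4_adj.2 ⟨ha, hb, hab⟩)
    (K4_adj.2 ⟨ha, hc.1, Ne.symm hc.2.1⟩) (K4_adj.2 ⟨hc.1, hb, hc.2.2⟩)
    (K4_adj.2 ⟨ha, hd.1, Ne.symm hd.2.1⟩) (K4_adj.2 ⟨hd.1, hb, hd.2.2⟩) hcd

lemma IsK4Subdivision.ncard_neighborSet_eq_three_iff {H : SimpleGraph ℕ} (hH : IsK4Subdivision H)
    (w : ℕ) : (H.neighborSet w).ncard = 3 ↔ w < 4 := by
  induction hH generalizing w with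
  | refl => exact ncard_neighborSet_K4_eq_three_iff w
  | @tail H _ _ hstep ih =>
    obtain ⟨u, v, x, huv, hx, rfl⟩ := subdivStep_iff.mp hstep
    by_cases hwx : w = x
    · subst hwx
      have hN : H.neighborSet w = ∅ := Set.eq_empty_of_forall_notMem fun y hy => hx ⟨y, hy⟩
      rw [neighborSet_subdivideEdge_self huv hx, Set.ncard_pair huv.ne, ← ih, hN]
      simp
    · rw [Set.ncard_def, encard_neighborSet_subdivideEdge huv hx hwx, ← Set.ncard_def, ih]

lemma IsK4Subdivision.hasThreeInternallyDisjointWalks {H : SimpleGraph ℕ}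
    (hH : IsK4Subdivision H) {a b : ℕ} (ha : a < 4) (hb : b < 4) (hab : a ≠ b) :
    H.HasThreeInternallyDisjointWalks a b := by
  induction hH with
  | refl => exact K4_hasThreeInternallyDisjointWalks ha hb hab
  | tail _ hstep ih =>
    obtain ⟨u, v, x, huv, hx, rfl⟩ := subdivStep_iff.mp hstep
    exact ih.subdivideEdge huv hx hab

theorem k4_subdivision_crosses_two_cut_general (G : SimpleGraph ℕ) (s t : ℕ)
    (H : SimpleGraph ℕ) (hHG : H ≤ G) (hH : IsK4Subdivision H) :
    ∃ X₀ : (G.induce (({s, t} : Set ℕ)ᶜ)).ConnectedComponent,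
      ∀ w : ℕ, (H.neighborSet w).ncard = 3 →
        w = s ∨ w = t ∨
          ∃ hw : w ∈ ({s, t} : Set ℕ)ᶜ,
            (⟨w, hw⟩ : ↥(({s, t} : Set ℕ)ᶜ)) ∈ X₀.supp := by
  obtain ⟨a, ha4, ha⟩ : ∃ a < 4, a ∈ ({s, t} : Set ℕ)ᶜ := by
    by_contra! h
    simp only [Set.mem_compl_iff, Set.mem_insert_iff, Set.mem_singleton_iff, not_or,
      not_and_or, not_not] at h
    have := h 0; have := h 1; have := h 2
    omega
  refine ⟨(G.induce _).connectedComponentMk ⟨a, ha⟩, fun w hw3 => ?_⟩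
  by_cases hw : w ∈ ({s, t} : Set ℕ)ᶜ
  · refine .inr (.inr ⟨hw, ConnectedComponent.sound ?_⟩)
    obtain rfl | hwa := eq_or_ne w a
    · rfl
    have hw4 := (hH.ncard_neighborSet_eq_three_iff w).mp hw3
    exact ((hH.hasThreeInternallyDisjointWalks hw4 ha4 hwa).reachable_induce_compl_pair hw ha).mono
      fun _ _ h => hHG h
  · simp only [Set.mem_compl_iff, Set.mem_insert_iff, Set.mem_singleton_iff, not_not] at hw
    exact hw.imp_right .inl

/-- If `{s,t}` is a separator of `G` (some two vertices outside `{s,t}` are connected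
in `G` but not in `G - {s,t}`) and `H ≤ G` is a subdivision of `K₄`, then there is a
single connected component `X₀` of `G - {s,t}` containing all four branching nodes
(the vertices of degree 3 in `H`) in `X₀ ∪ {s,t}`. -/
theorem k4_subdivision_crosses_two_cut (G : SimpleGraph ℕ) (s t : ℕ)
    (hsep : ∃ a b : ℕ, ∃ (ha : a ∈ ({s, t} : Set ℕ)ᶜ) (hb : b ∈ ({s, t} : Set ℕ)ᶜ),
      G.Reachable a b ∧
        ¬ (G.induce (({s, t} : Set ℕ)ᶜ)).Reachable ⟨a, ha⟩ ⟨b, hb⟩)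
    (H : SimpleGraph ℕ) (hHG : H ≤ G) (hH : IsK4Subdivision H) :
    ∃ X₀ : (G.induce (({s, t} : Set ℕ)ᶜ)).ConnectedComponent,
      ∀ w : ℕ, (H.neighborSet w).ncard = 3 →
        w = s ∨ w = t ∨
          ∃ hw : w ∈ ({s, t} : Set ℕ)ᶜ,
            (⟨w, hw⟩ : ↥(({s, t} : Set ℕ)ᶜ)) ∈ X₀.supp :=
  k4_subdivision_crosses_two_cut_general G s t H hHG hH
end

section
/- Let G be a graph and let W and Z be disjoint vertex subsets of G such that the induced subgraph G[W] is 2-connected, G[Z] is connected, and Z has at least 3 neighbors in W (|N_W(Z)| ≥ 3). Then the induced subgraph G[W ∪ Z] contains K_4 as a minor. -/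
/-!
Pick three vertices `w₁, w₂, w₃` of `W` with neighbours in `Z`. As `w₃` is not a cut vertex of
`G[W]`, there is a `w₁`–`w₂` path `P` in `W` avoiding `w₃`; let `C` be the component of `G[W - P]`
containing `w₃`. Since `G[W]` has no cut vertex, `C` has neighbours at two distinct vertices of
`P`. Cutting `P` between them into a piece containing `w₁` and a piece containing `w₂` yields four
pairwise adjacent, disjoint, connected branch sets: the two pieces, `C` and `Z`.
-/

/-- `G` contains `K₄` as a minor: there are four pairwise disjoint nonempty connected
branch sets with an edge of `G` between every two of them. -/
def HasK4Minor {V : Type} (G : SimpleGraph V) : Prop :=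
  ∃ B : Fin 4 → Set V,
    (∀ i, (G.induce (B i)).Connected) ∧
    (∀ i j, i ≠ j → Disjoint (B i) (B j)) ∧
    (∀ i j, i ≠ j → ∃ a ∈ B i, ∃ b ∈ B j, G.Adj a b)

/-- The induced subgraph `G[B]` is 2-connected: connected, at least 3 vertices,
and no cut vertex. -/
def TwoConnOn {V : Type} (G : SimpleGraph V) (B : Set V) : Prop :=
  (G.induce B).Connected ∧ 3 ≤ B.ncard ∧ ∀ b ∈ B, (G.induce (B \ {b})).Connected

lemma Fin.forall_ne_of_symmetric_four {R : Fin 4 → Fin 4 → Prop} (hR : ∀ i j, R i j → R j i)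
    (h01 : R 0 1) (h02 : R 0 2) (h03 : R 0 3) (h12 : R 1 2) (h13 : R 1 3) (h23 : R 2 3) :
    ∀ i j, i ≠ j → R i j := by
  intro i j hij
  fin_cases i <;> fin_cases j <;> first | exact absurd rfl hij | assumption | exact hR _ _ ‹_›

namespace SimpleGraph

section

variable {V : Type*} {G : SimpleGraph V}

lemma Connected.induce_preimage_val {s t : Set V} (h : (G.induce t).Connected) (hts : t ⊆ s) :
    ((G.induce s).induce (Subtype.val ⁻¹' t)).Connected :=
  h.map { toFun := fun v : t => ⟨⟨v, hts v.2⟩, v.2⟩, map_rel' := id }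
    fun ⟨⟨v, _⟩, hv⟩ => ⟨⟨v, hv⟩, rfl⟩

lemma exists_isPath_of_connected_induce {s : Set V} (h : (G.induce s).Connected) {u v : V}
    (hu : u ∈ s) (hv : v ∈ s) : ∃ p : G.Walk u v, p.IsPath ∧ ∀ x ∈ p.support, x ∈ s := by
  obtain ⟨p, hp⟩ := (h ⟨u, hu⟩ ⟨v, hv⟩).exists_isPath
  refine ⟨p.map (Embedding.induce s).toHom, hp.map (Embedding.induce (G := G) s).injective,
    fun x hx => ?_⟩
  erw [Walk.support_map, List.mem_map] at hx
  obtain ⟨⟨x, hxs⟩, -, rfl⟩ := hx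
  exact hxs

def componentIn (G : SimpleGraph V) (S : Set V) (a : V) : Set V :=
  {v | ∃ p : G.Walk a v, ∀ x ∈ p.support, x ∈ S}

lemma mem_componentIn_self {S : Set V} {a : V} (ha : a ∈ S) : a ∈ G.componentIn S a :=
  ⟨.nil, by simpa using ha⟩

lemma componentIn_subset {S : Set V} {a : V} : G.componentIn S a ⊆ S :=
  fun _ ⟨p, hp⟩ => hp _ p.end_mem_support

lemma mem_componentIn_of_adj {S : Set V} {a u v : V} (hu : u ∈ G.componentIn S a)
    (huv : G.Adj u v) (hv : v ∈ S) : v ∈ G.componentIn S a := by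
  obtain ⟨p, hp⟩ := hu
  refine ⟨p.concat huv, fun x hx => ?_⟩
  rw [Walk.support_concat, List.mem_append, List.mem_singleton] at hx
  rcases hx with hx | rfl
  exacts [hp x hx, hv]

lemma connected_induce_componentIn {S : Set V} {a : V} (ha : a ∈ S) :
    (G.induce (G.componentIn S a)).Connected := by
  classical
  refine induce_connected_of_patches a (mem_componentIn_self ha) fun {v} ⟨p, hp⟩ =>
    ⟨{x | x ∈ p.support}, fun x hx => ?_, p.start_mem_support, p.end_mem_support,
      p.connected_induce_support.preconnected _ _⟩
  exact ⟨p.takeUntil x hx, fun y hy => hp y (p.support_takeUntil_subset_support hx hy)⟩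

lemma exists_adj_of_notMem_componentIn {S T : Set V} {a b : V} (ha : a ∈ S) (p : G.Walk a b)
    (hpT : ∀ x ∈ p.support, x ∈ T) (hb : b ∉ G.componentIn S a) :
    ∃ c ∈ G.componentIn S a, ∃ v ∈ T, v ∉ S ∧ G.Adj c v := by
  obtain ⟨d, hd, hfst, hsnd⟩ := p.exists_boundary_dart _ (mem_componentIn_self ha) hb
  refine ⟨d.fst, hfst, d.snd, hpT _ (p.dart_snd_mem_support_of_mem_darts hd),
    fun hS => hsnd (mem_componentIn_of_adj hfst d.adj hS), d.adj⟩

/-- Were `x` the only vertex of `P` next to the component, `x` would separate `a` from the other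
end of `P` in `G[W]`. -/
lemma exists_two_attachments {W : Set V} (hconn : (G.induce W).Connected)
    (hcut : ∀ b ∈ W, (G.induce (W \ {b})).Connected) {u v a : V} (P : G.Walk u v)
    (hPW : ∀ x ∈ P.support, x ∈ W) (huv : u ≠ v) (ha : a ∈ W) (haP : a ∉ P.support) :
    ∃ x ∈ P.support, ∃ y ∈ P.support, x ≠ y ∧
      (∃ c ∈ G.componentIn {w | w ∈ W ∧ w ∉ P.support} a, G.Adj x c) ∧
      (∃ c ∈ G.componentIn {w | w ∈ W ∧ w ∉ P.support} a, G.Adj y c) := by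
  set S : Set V := {w | w ∈ W ∧ w ∉ P.support}
  have haS : a ∈ S := ⟨ha, haP⟩
  have hPC : ∀ x ∈ P.support, x ∉ G.componentIn S a := fun x hx hxC => (componentIn_subset hxC).2 hx
  obtain ⟨q, -, hq⟩ := exists_isPath_of_connected_induce hconn ha (hPW u P.start_mem_support)
  obtain ⟨c, hc, x, hxW, hxS, hcx⟩ :=
    exists_adj_of_notMem_componentIn haS q hq (hPC u P.start_mem_support)
  have hxP : x ∈ P.support := by_contra fun h => hxS ⟨hxW, h⟩
  obtain ⟨r, hrP, hrx⟩ : ∃ r ∈ P.support, r ≠ x := by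
    by_cases hux : u = x
    · exact ⟨v, P.end_mem_support, hux ▸ huv.symm⟩
    · exact ⟨u, P.start_mem_support, hux⟩
  obtain ⟨q', -, hq'⟩ := exists_isPath_of_connected_induce (hcut x (hPW x hxP))
    (show a ∈ W \ {x} from ⟨ha, fun h => haP (h ▸ hxP)⟩) (show r ∈ W \ {x} from ⟨hPW r hrP, hrx⟩)
  obtain ⟨c', hc', y, ⟨hyW, hyx⟩, hyS, hcy⟩ :=
    exists_adj_of_notMem_componentIn haS q' hq' (hPC r hrP)
  exact ⟨x, hxP, y, by_contra fun h => hyS ⟨hyW, h⟩, Ne.symm hyx, ⟨c, hc, hcx.symm⟩,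
    ⟨c', hc', hcy.symm⟩⟩

namespace Walk

lemma IsPath.exists_split_append {u y v x : V} {Q : G.Walk u y} {R : G.Walk y v}
    (hP : (Q.append R).IsPath) (hx : x ∈ Q.support) (hxy : x ≠ y) :
    ∃ T₁ T₂ : Set V, (G.induce T₁).Connected ∧ (G.induce T₂).Connected ∧ Disjoint T₁ T₂ ∧
      T₁ ∪ T₂ ⊆ {w | w ∈ (Q.append R).support} ∧ u ∈ T₁ ∧ v ∈ T₂ ∧
      (∃ a ∈ T₁, ∃ b ∈ T₂, G.Adj a b) ∧ x ∈ T₁ ∧ y ∈ T₂ := by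
  have hQ : ¬Q.Nil := fun h => hxy <| by
    rw [nil_iff_support_eq.mp h, List.mem_singleton] at hx
    exact hx.trans h.eq
  have hsupp := support_append_eq_support_dropLast_append Q R
  have hnodup := hP.support_nodup
  rw [hsupp, List.nodup_append] at hnodup
  refine ⟨{w | w ∈ Q.dropLast.support}, {w | w ∈ R.support}, Q.dropLast.connected_induce_support,
    R.connected_induce_support, Set.disjoint_left.2 fun w h₁ h₂ => hnodup.2.2 w ?_ w h₂ rfl,
    fun w hw => ?_, Q.dropLast.start_mem_support, R.end_mem_support,
    ⟨Q.penultimate, Q.dropLast.end_mem_support, y, R.start_mem_support, Q.adj_penultimate hQ⟩,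
    ?_, R.start_mem_support⟩
  · rwa [support_dropLast hQ] at h₁
  · rw [Set.mem_ofPred_eq, hsupp, List.mem_append, ← support_dropLast hQ]
    exact hw
  · rw [← support_dropLast_concat hQ, List.mem_append, List.mem_singleton] at hx
    exact hx.resolve_right hxy

lemma IsPath.exists_split {u v x y : V} {P : G.Walk u v} (hP : P.IsPath) (hx : x ∈ P.support)
    (hy : y ∈ P.support) (hxy : x ≠ y) :
    ∃ T₁ T₂ : Set V, (G.induce T₁).Connected ∧ (G.induce T₂).Connected ∧ Disjoint T₁ T₂ ∧
      T₁ ∪ T₂ ⊆ {w | w ∈ P.support} ∧ u ∈ T₁ ∧ v ∈ T₂ ∧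
      (∃ a ∈ T₁, ∃ b ∈ T₂, G.Adj a b) ∧ (x ∈ T₁ ∧ y ∈ T₂ ∨ y ∈ T₁ ∧ x ∈ T₂) := by
  classical
  rw [← P.take_spec hy] at hP hx ⊢
  rcases (mem_support_append_iff _ _).1 hx with hxQ | hxR
  · obtain ⟨T₁, T₂, h₁, h₂, hd, hsub, hu, hv, hadj, hx₁, hy₂⟩ := hP.exists_split_append hxQ hxy
    exact ⟨T₁, T₂, h₁, h₂, hd, hsub, hu, hv, hadj, .inl ⟨hx₁, hy₂⟩⟩
  · rw [← isPath_reverse_iff, reverse_append] at hP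
    obtain ⟨T₁, T₂, h₁, h₂, hd, hsub, hv, hu, ⟨a, ha, b, hb, hab⟩, hx₁, hy₂⟩ :=
      hP.exists_split_append (by rwa [support_reverse, List.mem_reverse]) hxy
    refine ⟨T₂, T₁, h₂, h₁, hd.symm, fun w hw => ?_, hu, hv, ⟨b, hb, a, ha, hab.symm⟩,
      .inr ⟨hy₂, hx₁⟩⟩
    have := hsub (Set.union_comm T₂ T₁ ▸ hw)
    rwa [← reverse_append, Set.mem_ofPred_eq, support_reverse, List.mem_reverse] at this

end Walk

end

variable {V : Type} {G : SimpleGraph V}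

lemma hasK4Minor_induce_of_branchSets {S : Set V} (B : Fin 4 → Set V) (hBS : ∀ i, B i ⊆ S)
    (hconn : ∀ i, (G.induce (B i)).Connected) (hdisj : ∀ i j, i ≠ j → Disjoint (B i) (B j))
    (hadj : ∀ i j, i ≠ j → ∃ a ∈ B i, ∃ b ∈ B j, G.Adj a b) :
    HasK4Minor (G.induce S) := by
  refine ⟨fun i => Subtype.val ⁻¹' B i, fun i => (hconn i).induce_preimage_val (hBS i),
    fun i j hij => (hdisj i j hij).preimage _, fun i j hij => ?_⟩
  obtain ⟨a, ha, b, hb, hab⟩ := hadj i j hij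
  exact ⟨⟨a, hBS i ha⟩, ha, ⟨b, hBS j hb⟩, hb, hab⟩

lemma hasK4Minor_induce_of_path {S C Z : Set V} {w₁ w₂ x y : V} {P : G.Walk w₁ w₂}
    (hP : P.IsPath) (hPS : ∀ v ∈ P.support, v ∈ S) (hCS : C ⊆ S) (hZS : Z ⊆ S)
    (hC : (G.induce C).Connected) (hZ : (G.induce Z).Connected)
    (hPC : Disjoint {v | v ∈ P.support} C) (hPZ : Disjoint {v | v ∈ P.support} Z)
    (hCZ : Disjoint C Z) (hx : x ∈ P.support) (hy : y ∈ P.support) (hxy : x ≠ y)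
    (hxC : ∃ c ∈ C, G.Adj x c) (hyC : ∃ c ∈ C, G.Adj y c)
    (hw₁Z : ∃ z ∈ Z, G.Adj w₁ z) (hw₂Z : ∃ z ∈ Z, G.Adj w₂ z)
    (hCZadj : ∃ c ∈ C, ∃ z ∈ Z, G.Adj c z) :
    HasK4Minor (G.induce S) := by
  obtain ⟨T₁, T₂, h₁, h₂, hd, hsub, hw₁, hw₂, hadj, hsep⟩ := hP.exists_split hx hy hxy
  have hT₁P : T₁ ⊆ {v | v ∈ P.support} := Set.subset_union_left.trans hsub
  have hT₂P : T₂ ⊆ {v | v ∈ P.support} := Set.subset_union_right.trans hsub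
  obtain ⟨hT₁C, hT₂C⟩ : (∃ a ∈ T₁, ∃ c ∈ C, G.Adj a c) ∧ (∃ a ∈ T₂, ∃ c ∈ C, G.Adj a c) := by
    obtain ⟨c, hc, hxc⟩ := hxC
    obtain ⟨c', hc', hyc'⟩ := hyC
    rcases hsep with ⟨hx₁, hy₂⟩ | ⟨hy₁, hx₂⟩
    exacts [⟨⟨x, hx₁, c, hc, hxc⟩, ⟨y, hy₂, c', hc', hyc'⟩⟩,
      ⟨⟨y, hy₁, c', hc', hyc'⟩, ⟨x, hx₂, c, hc, hxc⟩⟩]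
  refine hasK4Minor_induce_of_branchSets ![T₁, T₂, C, Z] (fun i => ?_) (fun i => ?_)
    (Fin.forall_ne_of_symmetric_four (fun _ _ h => h.symm) hd (hPC.mono_left hT₁P)
      (hPZ.mono_left hT₁P) (hPC.mono_left hT₂P) (hPZ.mono_left hT₂P) hCZ)
    (Fin.forall_ne_of_symmetric_four (fun _ _ ⟨a, ha, b, hb, hab⟩ => ⟨b, hb, a, ha, hab.symm⟩)
      hadj hT₁C ⟨w₁, hw₁, hw₁Z⟩ hT₂C ⟨w₂, hw₂, hw₂Z⟩ hCZadj)
  · fin_cases i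
    exacts [fun v hv => hPS v (hT₁P hv), fun v hv => hPS v (hT₂P hv), hCS, hZS]
  · fin_cases i
    exacts [h₁, h₂, hC, hZ]

end SimpleGraph

open SimpleGraph

/-- If `W` and `Z` are disjoint, `G[W]` is 2-connected, `G[Z]` is connected, and `Z`
has at least three neighbors in `W`, then `G[W ∪ Z]` contains `K₄` as a minor. -/
theorem k4_minor_of_three_attachments {V : Type} (G : SimpleGraph V) (W Z : Set V)
    (hdisj : Disjoint W Z)
    (hW : TwoConnOn G W)
    (hZ : (G.induce Z).Connected)
    (hN : 3 ≤ ({w ∈ W | ∃ z ∈ Z, G.Adj w z}).ncard) :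
    HasK4Minor (G.induce (W ∪ Z)) := by
  obtain ⟨hWconn, -, hWcut⟩ := hW
  obtain ⟨t, hts, htc⟩ := Set.exists_subset_card_eq hN
  obtain ⟨w₁, w₂, w₃, h₁₂, h₁₃, h₂₃, rfl⟩ := Set.ncard_eq_three.mp htc
  obtain ⟨hw₁, hw₁Z⟩ := hts (by simp : w₁ ∈ ({w₁, w₂, w₃} : Set V))
  obtain ⟨hw₂, hw₂Z⟩ := hts (by simp : w₂ ∈ ({w₁, w₂, w₃} : Set V))
  obtain ⟨hw₃, z₃, hz₃, hw₃z₃⟩ := hts (by simp : w₃ ∈ ({w₁, w₂, w₃} : Set V))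
  obtain ⟨P, hP, hPW₃⟩ :=
    exists_isPath_of_connected_induce (hWcut w₃ hw₃) (u := w₁) ⟨hw₁, h₁₃⟩ ⟨hw₂, h₂₃⟩
  have hPW : ∀ v ∈ P.support, v ∈ W := fun v hv => (hPW₃ v hv).1
  have hw₃S : w₃ ∈ {w | w ∈ W ∧ w ∉ P.support} := ⟨hw₃, fun h => (hPW₃ w₃ h).2 rfl⟩
  have hCW : G.componentIn {w | w ∈ W ∧ w ∉ P.support} w₃ ⊆ W :=
    fun v hv => (componentIn_subset hv).1
  obtain ⟨x, hx, y, hy, hxy, hxC, hyC⟩ :=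
    exists_two_attachments hWconn hWcut P hPW h₁₂ hw₃ hw₃S.2
  exact hasK4Minor_induce_of_path hP (fun v hv => .inl (hPW v hv))
    (hCW.trans Set.subset_union_left) Set.subset_union_right (connected_induce_componentIn hw₃S)
    hZ (Set.disjoint_left.2 fun v hv hvC => (componentIn_subset hvC).2 hv) (hdisj.mono_left hPW)
    (hdisj.mono_left hCW) hx hy hxy hxC hyC hw₁Z hw₂Z
    ⟨w₃, mem_componentIn_self hw₃S, z₃, hz₃, hw₃z₃⟩
end

section
/- Let G be a 2-connected graph and u a vertex not in G with at least three neighbors x, y, z in G. Then the graph G' obtained by adding u and the edges (u,x),(u,y),(u,z) to G contains K_4 as a minor. -/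
/-- `G` is 2-connected: connected, at least 3 vertices, and no cut vertex. -/
def TwoConnected {V : Type} (G : SimpleGraph V) : Prop :=
  G.Connected ∧ 3 ≤ Nat.card V ∧ ∀ v : V, (G.induce ({v}ᶜ : Set V)).Connected

/-- The graph obtained from `G` by adding a new vertex (`none`) adjacent to the three
vertices `x`, `y`, `z` of `G`. -/
def addApexVertex {V : Type} (G : SimpleGraph V) (x y z : V) : SimpleGraph (Option V) :=
  SimpleGraph.fromRel (fun a b =>
    (∃ p q, a = some p ∧ b = some q ∧ G.Adj p q) ∨
    (a = none ∧ (b = some x ∨ b = some y ∨ b = some z)))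

/-!
Take a `y`–`z` path `P` avoiding `x`. No single vertex separates `x` from `P`, so a walk from `x`
that stays off `P` reaches a neighbour `b ≠ y` of `P`, and another one reaches a neighbour `c ≠ b`;
the union `X` of the two walks is connected. Cutting `P` between `b` and `c` yields two connected
arcs through `y` and `z`, each adjacent to `X`: a `K₃` minor rooted at `x, y, z`. The new vertex,
adjacent to the three roots, completes it to a `K₄` minor.
-/

open SimpleGraph

def HasRootedCliqueMinor {V : Type} (G : SimpleGraph V) {n : ℕ} (r : Fin n → V) : Prop :=
  ∃ B : Fin n → Set V, (∀ i, r i ∈ B i) ∧ (∀ i, (G.induce (B i)).Connected) ∧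
    (∀ i j, i ≠ j → Disjoint (B i) (B j)) ∧
    (∀ i j, i ≠ j → ∃ a ∈ B i, ∃ b ∈ B j, G.Adj a b)

namespace SimpleGraph

variable {V : Type} {G : SimpleGraph V}

lemma induce_singleton_connected (v : V) : (G.induce {v}).Connected := by
  rw [induce_singleton_eq_top]
  exact connected_top

lemma Connected.induce_image {W : Type} {H : SimpleGraph W} (f : G →g H) {s : Set V}
    (hs : (G.induce s).Connected) : (H.induce (f '' s)).Connected :=
  hs.map (induceHom f (Set.mapsTo_image f s)) <| by
    rintro ⟨_, a, ha, rfl⟩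
    exact ⟨⟨a, ha⟩, rfl⟩

lemma exists_isPath_of_induce_connected {s : Set V} (hs : (G.induce s).Connected) {a b : V}
    (ha : a ∈ s) (hb : b ∈ s) : ∃ p : G.Walk a b, p.IsPath ∧ ∀ w ∈ p.support, w ∈ s := by
  obtain ⟨p, hp⟩ := (hs.preconnected ⟨a, ha⟩ ⟨b, hb⟩).exists_isPath
  refine ⟨p.map (Embedding.induce s).toHom, hp.map (Embedding.induce (G := G) s).injective, ?_⟩
  intro w hw
  obtain ⟨⟨w, hws⟩, -, rfl⟩ := List.mem_map.1 (p.support_map (Embedding.induce s).toHom ▸ hw)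
  exact hws

lemma Walk.exists_walk_compl_adj_mem {u v : V} (p : G.Walk u v) {s : Set V} (hu : u ∉ s)
    (hv : v ∈ s) :
    ∃ w c, c ∈ p.support ∧ c ∈ s ∧ G.Adj w c ∧ ∃ q : G.Walk u w, ∀ a ∈ q.support, a ∉ s := by
  induction p with
  | nil => exact absurd hv hu
  | @cons u u' v h p ih =>
    by_cases hu' : u' ∈ s
    · exact ⟨u, u', by simp, hu', h, Walk.nil, by simpa using hu⟩
    · obtain ⟨w, c, hcp, hcs, hwc, q, hq⟩ := ih hu' hv
      refine ⟨w, c, by simp [hcp], hcs, hwc, Walk.cons h q, ?_⟩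
      simpa [hu] using hq

lemma exists_walk_compl_adj_mem_ne {v x t : V} {s : Set V} (hv : (G.induce {v}ᶜ).Connected)
    (hxv : x ≠ v) (hx : x ∉ s) (htv : t ≠ v) (ht : t ∈ s) :
    ∃ w c, c ∈ s ∧ c ≠ v ∧ G.Adj w c ∧ ∃ q : G.Walk x w, ∀ a ∈ q.support, a ∉ s := by
  obtain ⟨p, -, hpv⟩ := exists_isPath_of_induce_connected hv (a := x) (b := t) hxv htv
  obtain ⟨w, c, hcp, hcs, hwc, hq⟩ := p.exists_walk_compl_adj_mem hx ht
  exact ⟨w, c, hcs, hpv c hcp, hwc, hq⟩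

lemma Walk.IsPath.exists_split_s11 {u v : V} {p : G.Walk u v} (hp : p.IsPath) {s : Set V}
    {b c : V} (hb : b ∈ p.support) (hc : c ∈ p.support) (hbs : b ∈ s) (hcs : c ∈ s) (hbc : b ≠ c) :
    ∃ A B : Set V, u ∈ A ∧ v ∈ B ∧ A ⊆ {w | w ∈ p.support} ∧ B ⊆ {w | w ∈ p.support} ∧
      (G.induce A).Connected ∧ (G.induce B).Connected ∧ Disjoint A B ∧
      (∃ a ∈ A, ∃ b ∈ B, G.Adj a b) ∧ (A ∩ s).Nonempty ∧ (B ∩ s).Nonempty := by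
  induction p with
  | nil => simp_all
  | @cons u u' v h p ih =>
    rw [Walk.cons_isPath_iff] at hp
    by_cases hus : u ∈ s
    · obtain ⟨d, hdp, hds⟩ : ∃ d ∈ p.support, d ∈ s := by
        by_cases hbu : b = u
        · exact ⟨c, by simpa [← hbu, Ne.symm hbc] using hc, hcs⟩
        · exact ⟨b, by simpa [hbu] using hb, hbs⟩
      refine ⟨{u}, {w | w ∈ p.support}, rfl, p.end_mem_support, by simp,
        fun _ hw => List.mem_cons_of_mem _ hw, induce_singleton_connected u,
        p.connected_induce_support, by simpa using hp.2,
        ⟨u, rfl, u', p.start_mem_support, h⟩, ⟨u, rfl, hus⟩, ⟨d, hdp, hds⟩⟩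
    · have hbu : b ≠ u := fun h => hus (h ▸ hbs)
      have hcu : c ≠ u := fun h => hus (h ▸ hcs)
      obtain ⟨A, B, hu'A, hvB, hAp, hBp, hA, hB, hAB, hadj, hAs, hBs⟩ :=
        ih hp.1 (by simpa [hbu] using hb) (by simpa [hcu] using hc)
      refine ⟨{u} ∪ A, B, by simp, hvB, ?_, fun _ hw => List.mem_cons_of_mem _ (hBp hw), ?_, hB,
        ?_, ?_, hAs.mono (Set.inter_subset_inter_left _ Set.subset_union_right), hBs⟩
      · rintro w (rfl | hw)
        exacts [Walk.start_mem_support _, List.mem_cons_of_mem _ (hAp hw)]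
      · exact connected_induce_union (induce_singleton_connected u).preconnected hA.preconnected
          rfl hu'A h
      · exact Set.disjoint_union_left.2 ⟨by simpa using fun huB => hp.2 (hBp huB), hAB⟩
      · obtain ⟨a, ha, b, hb, hab⟩ := hadj
        exact ⟨a, Or.inr ha, b, hb, hab⟩

lemma hasRootedCliqueMinor_three {x y z : V} {X Y Z : Set V} (hx : x ∈ X) (hy : y ∈ Y)
    (hz : z ∈ Z) (hX : (G.induce X).Connected) (hY : (G.induce Y).Connected)
    (hZ : (G.induce Z).Connected) (hXY : Disjoint X Y) (hXZ : Disjoint X Z) (hYZ : Disjoint Y Z)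
    (eXY : ∃ a ∈ X, ∃ b ∈ Y, G.Adj a b) (eXZ : ∃ a ∈ X, ∃ b ∈ Z, G.Adj a b)
    (eYZ : ∃ a ∈ Y, ∃ b ∈ Z, G.Adj a b) : HasRootedCliqueMinor G ![x, y, z] := by
  have adj_symm : ∀ {S T : Set V}, (∃ a ∈ S, ∃ b ∈ T, G.Adj a b) → ∃ a ∈ T, ∃ b ∈ S, G.Adj a b :=
    fun ⟨a, ha, b, hb, hab⟩ => ⟨b, hb, a, ha, hab.symm⟩
  refine ⟨![X, Y, Z], ?_, ?_, ?_, ?_⟩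
  · intro i; fin_cases i <;> assumption
  · intro i; fin_cases i <;> assumption
  · intro i j hij
    fin_cases i <;> fin_cases j <;>
      first | exact absurd rfl hij | assumption | exact Disjoint.symm ‹_›
  · intro i j hij
    fin_cases i <;> fin_cases j <;>
      first | exact absurd rfl hij | assumption | exact adj_symm ‹_›

theorem TwoConnected.hasRootedCliqueMinor (h2 : TwoConnected G) {x y z : V} (hxy : x ≠ y)
    (hxz : x ≠ z) (hyz : y ≠ z) : HasRootedCliqueMinor G ![x, y, z] := by
  obtain ⟨-, -, hcut⟩ := h2
  obtain ⟨P, hP, hPx⟩ := exists_isPath_of_induce_connected (hcut x) (a := y) (b := z)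
    hxy.symm hxz.symm
  have hxP : x ∉ {w | w ∈ P.support} := fun h => hPx x h rfl
  obtain ⟨w₁, b, hbP, hby, hwb, W₁, hW₁⟩ :=
    exists_walk_compl_adj_mem_ne (hcut y) hxy hxP hyz.symm P.end_mem_support
  obtain ⟨w₂, c, hcP, hcb, hwc, W₂, hW₂⟩ :=
    exists_walk_compl_adj_mem_ne (hcut b) (by rintro rfl; exact hxP hbP) hxP hby.symm
      P.start_mem_support
  set X := {a | a ∈ W₁.support} ∪ {a | a ∈ W₂.support}
  have hXP : Disjoint X {w | w ∈ P.support} := by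
    rw [Set.disjoint_left]
    rintro a (ha | ha)
    exacts [hW₁ a ha, hW₂ a ha]
  obtain ⟨Y, Z, hyY, hzZ, hYP, hZP, hY, hZ, hYZ, eYZ, ⟨d, hdY, a, haX, had⟩,
      ⟨e, heZ, a', ha'X, hae⟩⟩ :=
    hP.exists_split_s11 (s := {c | ∃ a ∈ X, G.Adj a c}) hbP hcP
      ⟨w₁, Or.inl W₁.end_mem_support, hwb⟩ ⟨w₂, Or.inr W₂.end_mem_support, hwc⟩ hcb.symm
  exact hasRootedCliqueMinor_three (Or.inl W₁.start_mem_support) hyY hzZ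
    (induce_union_connected W₁.connected_induce_support.preconnected
      W₂.connected_induce_support.preconnected ⟨x, W₁.start_mem_support, W₂.start_mem_support⟩)
    hY hZ (hXP.mono_right hYP) (hXP.mono_right hZP) hYZ ⟨a, haX, d, hdY, had⟩
    ⟨a', ha'X, e, heZ, hae⟩ eYZ

lemma addApexVertex_adj_some {x y z p q : V} (h : G.Adj p q) :
    (addApexVertex G x y z).Adj (some p) (some q) := by
  simp [addApexVertex, h, h.ne]

lemma HasRootedCliqueMinor.hasK4Minor_addApexVertex {x y z : V}
    (h : HasRootedCliqueMinor G ![x, y, z]) : HasK4Minor (addApexVertex G x y z) := by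
  obtain ⟨B, hr, hB, hdisj, hadj⟩ := h
  let f : G →g addApexVertex G x y z := ⟨some, addApexVertex_adj_some⟩
  have hapex : ∀ i, (addApexVertex G x y z).Adj none (some (![x, y, z] i)) := by
    intro i; fin_cases i <;> simp [addApexVertex]
  refine ⟨Fin.cons {none} fun i => f '' B i, ?_, ?_, ?_⟩
  · intro i
    cases i using Fin.cases with
    | zero => exact induce_singleton_connected none
    | succ i => exact (hB i).induce_image f
  · intro i j hij
    cases i using Fin.cases <;> cases j using Fin.cases
    · exact absurd rfl hij
    · simp [f]
    · simp [f]
    · exact (Set.disjoint_image_iff (Option.some_injective V)).2 (hdisj _ _ (by simpa using hij))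
  · intro i j hij
    cases i using Fin.cases <;> cases j using Fin.cases
    · exact absurd rfl hij
    · exact ⟨none, rfl, _, Set.mem_image_of_mem f (hr _), hapex _⟩
    · exact ⟨_, Set.mem_image_of_mem f (hr _), none, rfl, (hapex _).symm⟩
    · obtain ⟨a, ha, b, hb, hab⟩ := hadj _ _ (by simpa using hij)
      exact ⟨f a, Set.mem_image_of_mem f ha, f b, Set.mem_image_of_mem f hb, f.map_adj hab⟩

end SimpleGraph

/-- Adding a new vertex with three neighbors in a 2-connected graph creates a `K₄` minor. -/
theorem k4_minor_of_apex_on_two_connected {V : Type} (G : SimpleGraph V)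
    (h2 : TwoConnected G) (x y z : V) (hxy : x ≠ y) (hxz : x ≠ z) (hyz : y ≠ z) :
    HasK4Minor (addApexVertex G x y z) :=
  (h2.hasRootedCliqueMinor hxy hxz hyz).hasK4Minor_addApexVertex
end

section
/- Let G be a graph and W ⊆ V(G) a vertex subset such that G - W is K_4-minor-free. Let v be a vertex of G of degree two with neighbors u_1, u_2, and suppose v ∈ W. Then W' = (W \ {v}) ∪ {u_2} satisfies |W'| ≤ |W| and G - W' is K_4-minor-free. -/
open SimpleGraph

/-- Iso between iterated induce and induce of image. -/
def induceInduceIso {V : Type} (G : SimpleGraph V) (A : Set V) (B : Set ↥A) :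
    (G.induce A).induce B ≃g G.induce (Subtype.val '' B) where
  toFun := fun x => ⟨x.1.1, ⟨x.1, x.2, rfl⟩⟩
  invFun := fun y => ⟨⟨y.1, by obtain ⟨a, ha, h⟩ := y.2; exact h ▸ a.2⟩,
    by obtain ⟨a, ha, h⟩ := y.2; cases a; cases h; exact ha⟩
  left_inv := fun x => rfl
  right_inv := fun y => rfl
  map_rel_iff' := Iff.rfl

lemma reach_aux {α : Type} (H : SimpleGraph α) (v : α)
    (huniq : ∀ w w', H.Adj v w → H.Adj v w' → w = w') :
    ∀ n {x y : α} (p : H.Walk x y), p.length ≤ n → ∀ (hx : x ≠ v) (hy : y ≠ v),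
      (H.induce {w | w ≠ v}).Reachable ⟨x, hx⟩ ⟨y, hy⟩ := by
  intro n
  induction n with
  | zero =>
    intro x y p hp hx hy
    cases p with
    | nil => exact Reachable.refl _
    | cons h q => simp [SimpleGraph.Walk.length_cons] at hp
  | succ n ih =>
    intro x y p hp hx hy
    cases p with
    | nil => exact Reachable.refl _
    | cons h q =>
      rename_i z
      by_cases hz : z = v
      · subst hz
        cases q with
        | nil => exact absurd rfl hy
        | cons h' q' =>
          rename_i z'
          have hxz' : z' = x := huniq z' x h' h.symm
          subst hxz'
          exact ih q' (by simp [SimpleGraph.Walk.length_cons] at hp ⊢; omega) hx hy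
      · have hadj : (H.induce {w | w ≠ v}).Adj ⟨x, hx⟩ ⟨z, hz⟩ := h
        exact (hadj.reachable).trans
          (ih q (by simp [SimpleGraph.Walk.length_cons] at hp ⊢; omega) hz hy)

lemma connected_del {α : Type} (H : SimpleGraph α) (v : α)
    (huniq : ∀ w w', H.Adj v w → H.Adj v w' → w = w')
    (hc : H.Connected) (hne : ∃ x : α, x ≠ v) :
    (H.induce {w | w ≠ v}).Connected := by
  obtain ⟨x₀, hx₀⟩ := hne
  rw [connected_iff]
  refine ⟨?_, ⟨⟨x₀, hx₀⟩⟩⟩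
  rintro ⟨x, hx⟩ ⟨y, hy⟩
  obtain ⟨p⟩ := hc.preconnected x y
  exact reach_aux H v huniq p.length p le_rfl hx hy

/-- transfer HasK4Minor on induced graph to branch sets in `V`. -/
lemma hasK4Minor_induce_iff {V : Type} (G : SimpleGraph V) (A : Set V) :
    HasK4Minor (G.induce A) ↔
      ∃ C : Fin 4 → Set V, (∀ i, C i ⊆ A) ∧ (∀ i, (G.induce (C i)).Connected) ∧
        (∀ i j, i ≠ j → Disjoint (C i) (C j)) ∧
        (∀ i j, i ≠ j → ∃ a ∈ C i, ∃ b ∈ C j, G.Adj a b) := by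
  constructor
  · rintro ⟨B, hconn, hdisj, hadj⟩
    refine ⟨fun i => Subtype.val '' B i, fun i => ?_, fun i => ?_, fun i j hij => ?_,
      fun i j hij => ?_⟩
    · rintro x ⟨a, _, rfl⟩; exact a.2
    · exact ((induceInduceIso G A (B i)).connected_iff).mp (hconn i)
    · rw [Set.disjoint_left]
      rintro x ⟨a, ha, rfl⟩ ⟨b, hb, hba⟩
      have : b = a := Subtype.ext hba
      exact (hdisj i j hij).le_bot ⟨ha, this ▸ hb⟩
    · obtain ⟨a, ha, b, hb, hab⟩ := hadj i j hij
      exact ⟨a, ⟨a, ha, rfl⟩, b, ⟨b, hb, rfl⟩, hab⟩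
  · rintro ⟨C, hsub, hconn, hdisj, hadj⟩
    refine ⟨fun i => {x : ↥A | ↑x ∈ C i}, fun i => ?_, fun i j hij => ?_, fun i j hij => ?_⟩
    · have himg : Subtype.val '' {x : ↥A | ↑x ∈ C i} = C i := by
        ext x
        constructor
        · rintro ⟨a, ha, rfl⟩; exact ha
        · intro hx; exact ⟨⟨x, hsub i hx⟩, hx, rfl⟩
      have := ((induceInduceIso G A {x : ↥A | ↑x ∈ C i}).connected_iff)
      rw [himg] at this
      exact this.mpr (hconn i)
    · rw [Set.disjoint_left]
      rintro x hx hx'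
      exact (hdisj i j hij).le_bot ⟨hx, hx'⟩
    · obtain ⟨a, ha, b, hb, hab⟩ := hadj i j hij
      exact ⟨⟨a, hsub i ha⟩, ha, ⟨b, hsub j hb⟩, hb, hab⟩
/-- If `W` is a `K₄`-minor cover of `G` containing a degree-two vertex `v` with
neighbors `u₁, u₂`, then `W' = (W \ {v}) ∪ {u₂}` is a `K₄`-minor cover of `G` with
`|W'| ≤ |W|`. -/
theorem cover_swap_degree_two_vertex {V : Type} (G : SimpleGraph V) (W : Set V)
    (hW : ¬ HasK4Minor (G.induce (Wᶜ : Set V)))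
    (v u₁ u₂ : V) (h12 : u₁ ≠ u₂) (hnbr : G.neighborSet v = {u₁, u₂})
    (hv : v ∈ W) :
    ((W \ {v}) ∪ {u₂}).ncard ≤ W.ncard ∧
      ¬ HasK4Minor (G.induce ((((W \ {v}) ∪ {u₂})ᶜ : Set V))) := by
  set W' : Set V := (W \ {v}) ∪ {u₂} with hW'
  -- basic facts
  have hadj_iff : ∀ w, G.Adj v w ↔ (w = u₁ ∨ w = u₂) := by
    intro w
    constructor
    · intro h
      have : w ∈ G.neighborSet v := h
      rw [hnbr] at this
      exact this
    · intro h
      have : w ∈ G.neighborSet v := by rw [hnbr]; exact h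
      exact this
  have hvu₁ : v ≠ u₁ := fun h => G.irrefl (h ▸ (hadj_iff u₁).mpr (Or.inl rfl))
  have hvu₂ : v ≠ u₂ := fun h => G.irrefl (h ▸ (hadj_iff u₂).mpr (Or.inr rfl))
  constructor
  · -- cardinality
    by_cases hfin : W.Finite
    · have h1 : W'.encard ≤ (W \ {v}).encard + 1 := by
        calc W'.encard ≤ (W \ {v}).encard + ({u₂} : Set V).encard := Set.encard_union_le _ _
        _ = (W \ {v}).encard + 1 := by rw [Set.encard_singleton]
      have h2 : (W \ {v}).encard + 1 = W.encard := Set.encard_diff_singleton_add_one hv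
      have h3 : W'.encard ≤ W.encard := h1.trans_eq h2
      rw [Set.ncard_def, Set.ncard_def]
      exact ENat.toNat_le_toNat h3 (by rwa [Set.encard_ne_top_iff])
    · have hinf : W.Infinite := hfin
      have hinf' : W'.Infinite := ((hinf.diff (Set.finite_singleton v)).mono
        Set.subset_union_left)
      rw [hinf.ncard, hinf'.ncard]
  · -- minor part
    intro hmin
    rw [hasK4Minor_induce_iff] at hmin
    obtain ⟨C, hsub, hconn, hdisj, hadj⟩ := hmin
    have hu₂S : ∀ i, u₂ ∉ C i := by
      intro i h
      have := hsub i h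
      simp [hW'] at this
    -- claim: if v ∈ C i then u₁ ∈ C i
    have hclaim : ∀ i, v ∈ C i → u₁ ∈ C i := by
      intro i hvCi
      by_cases hbig : ∃ w ∈ C i, w ≠ v
      · obtain ⟨w, hw, hwv⟩ := hbig
        obtain ⟨p⟩ := (hconn i).preconnected ⟨v, hvCi⟩ ⟨w, hw⟩
        cases p with
        | nil => exact absurd rfl hwv
        | cons h q =>
          rename_i z
          have hGadj : G.Adj v ↑z := h
          rcases (hadj_iff ↑z).mp hGadj with h1 | h2
          · exact h1 ▸ z.2
          · exact absurd (h2 ▸ z.2) (hu₂S i)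
      · -- C i = {v}
        push_neg at hbig
        have h3 : ∀ m : Fin 4, ∃ j k : Fin 4, j ≠ m ∧ k ≠ m ∧ j ≠ k := by decide
        obtain ⟨j, k, hji, hki, hjk⟩ := h3 i
        have hbj : u₁ ∈ C j := by
          obtain ⟨a, ha, b, hb, hab⟩ := hadj i j (Ne.symm hji)
          have hav : a = v := hbig a ha
          subst hav
          rcases (hadj_iff b).mp hab with h1 | h2
          · exact h1 ▸ hb
          · exact absurd (h2 ▸ hb) (hu₂S j)
        have hbk : u₁ ∈ C k := by
          obtain ⟨a, ha, b, hb, hab⟩ := hadj i k (Ne.symm hki)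
          have hav : a = v := hbig a ha
          subst hav
          rcases (hadj_iff b).mp hab with h1 | h2
          · exact h1 ▸ hb
          · exact absurd (h2 ▸ hb) (hu₂S k)
        exact absurd hbk (Set.disjoint_left.mp (hdisj j k hjk) hbj)
    -- build new branch sets
    apply hW
    rw [hasK4Minor_induce_iff]
    refine ⟨fun i => C i \ {v}, fun i => ?_, fun i => ?_, fun i j hij => ?_, fun i j hij => ?_⟩
    · rintro x ⟨hx, hxv⟩
      have hx' := hsub i hx
      simp only [hW', Set.mem_compl_iff, Set.mem_union, Set.mem_diff,
        Set.mem_singleton_iff, not_or] at hx'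
      push_neg at hx'
      simp only [Set.mem_singleton_iff] at hxv
      exact fun hxW => hxv (hx'.1 hxW)
    · -- connectivity
      show (G.induce (C i \ {v})).Connected
      by_cases hvCi : v ∈ C i
      · have hu₁Ci : u₁ ∈ C i := hclaim i hvCi
        have huniq : ∀ w w' : ↥(C i), (G.induce (C i)).Adj ⟨v, hvCi⟩ w →
            (G.induce (C i)).Adj ⟨v, hvCi⟩ w' → w = w' := by
          rintro ⟨w, hw⟩ ⟨w', hw'⟩ h h'
          have hge : ∀ z : ↥(C i), (G.induce (C i)).Adj ⟨v, hvCi⟩ z → (z : V) = u₁ := by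
            rintro ⟨z, hz⟩ hzadj
            rcases (hadj_iff z).mp hzadj with h1 | h2
            · exact h1
            · exact absurd (h2 ▸ hz) (hu₂S i)
          exact Subtype.ext ((hge _ h).trans (hge _ h').symm)
        have hcd := connected_del (G.induce (C i)) ⟨v, hvCi⟩
          (by intro w w' h h'; exact huniq w w' h h') (hconn i)
          ⟨⟨u₁, hu₁Ci⟩, by simp [Subtype.ext_iff]; exact fun h => hvu₁ h.symm⟩
        have himg : Subtype.val '' {w : ↥(C i) | w ≠ (⟨v, hvCi⟩ : ↥(C i))} = C i \ {v} := by
          ext x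
          constructor
          · rintro ⟨a, ha, rfl⟩
            exact ⟨a.2, by simpa [Subtype.ext_iff] using ha⟩
          · rintro ⟨hx, hxv⟩
            exact ⟨⟨x, hx⟩, by simpa [Subtype.ext_iff] using hxv, rfl⟩
        have := (induceInduceIso G (C i) {w : ↥(C i) | w ≠ (⟨v, hvCi⟩ : ↥(C i))}).connected_iff
        rw [himg] at this
        exact this.mp hcd
      · have : C i \ {v} = C i := by
          ext x; simp only [Set.mem_diff, Set.mem_singleton_iff, and_iff_left_iff_imp]
          rintro hx rfl; exact hvCi hx
        rw [this]; exact hconn i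
    · exact (hdisj i j hij).mono Set.diff_subset Set.diff_subset
    · obtain ⟨a, ha, b, hb, hab⟩ := hadj i j hij
      have hav : a ≠ v := by
        rintro rfl
        rcases (hadj_iff b).mp hab with h1 | h2
        · exact (hdisj i j hij).le_bot ⟨hclaim i ha, h1 ▸ hb⟩
        · exact hu₂S j (h2 ▸ hb)
      have hbv : b ≠ v := by
        rintro rfl
        rcases (hadj_iff a).mp hab.symm with h1 | h2
        · exact (hdisj i j hij).le_bot ⟨h1 ▸ ha, hclaim j hb⟩
        · exact hu₂S i (h2 ▸ ha)
      exact ⟨a, ⟨ha, hav⟩, b, ⟨hb, hbv⟩, hab⟩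
end
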